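/- Let (γ,v₁,v₂) be a pseudo-spherical timelike framed curve with curvature (α,ℓ,m,n) and let θ : I → ℝ be smooth with θ'(s) = ℓ(s) for all s. Define v̄₁(s) = cos θ(s)·v₁(s) - sin θ(s)·v₂(s) and v̄₂(s) = sin θ(s)·v₁(s) + cos θ(s)·v₂(s). Then (γ,v̄₁,v̄₂) is also a pseudo-spherical timelike framed curve, γ(s)×v̄₁(s)×v̄₂(s) = μ(s) for all s, and its curvature is (α, 0, m̄, n̄), where m̄(s) = cos θ(s)·m(s) - sin θ(s)·n(s) and n̄(s) = sin θ(s)·m(s) + cos θ(s)·n(s). -/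

import Mathlib

noncomputable section

/-- The index-2 pseudo-scalar product on `ℝ⁴₂`. -/
def pdot (u w : Fin 4 → ℝ) : ℝ :=
  -(u 0 * w 0) - u 1 * w 1 + u 2 * w 2 + u 3 * w 3

/-- 3×3 determinant. -/
def det3 (a b c d e f g h i : ℝ) : ℝ :=
  a * (e * i - f * h) - b * (d * i - f * g) + c * (d * h - e * g)

/-- The triple product `u×v×w` in `ℝ⁴₂`. -/
def tripleProd (u v w : Fin 4 → ℝ) : Fin 4 → ℝ :=
  ![ -det3 (u 1) (u 2) (u 3) (v 1) (v 2) (v 3) (w 1) (w 2) (w 3),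
      det3 (u 0) (u 2) (u 3) (v 0) (v 2) (v 3) (w 0) (w 2) (w 3),
      det3 (u 0) (u 1) (u 3) (v 0) (v 1) (v 3) (w 0) (w 1) (w 3),
     -det3 (u 0) (u 1) (u 2) (v 0) (v 1) (v 2) (w 0) (w 1) (w 2)]

/-- `μ(s) = γ(s)×v₁(s)×v₂(s)`. -/
def muOf (γ v₁ v₂ : ℝ → Fin 4 → ℝ) (s : ℝ) : Fin 4 → ℝ :=
  tripleProd (γ s) (v₁ s) (v₂ s)

/-- Pseudo-spherical spacelike framed curve on the open interval `I`. -/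
structure SpacelikeFramed (I : Set ℝ) (γ v₁ v₂ : ℝ → Fin 4 → ℝ) (ε : ℝ) : Prop where
  smooth_γ : ContDiffOn ℝ (⊤ : ℕ∞) γ I
  smooth_v₁ : ContDiffOn ℝ (⊤ : ℕ∞) v₁ I
  smooth_v₂ : ContDiffOn ℝ (⊤ : ℕ∞) v₂ I
  eps : ε = 1 ∨ ε = -1
  ads : ∀ s ∈ I, pdot (γ s) (γ s) = -1
  normv₁ : ∀ s ∈ I, pdot (v₁ s) (v₁ s) = ε
  normv₂ : ∀ s ∈ I, pdot (v₂ s) (v₂ s) = -ε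
  orth₁ : ∀ s ∈ I, pdot (γ s) (v₁ s) = 0
  orth₂ : ∀ s ∈ I, pdot (γ s) (v₂ s) = 0
  orth₃ : ∀ s ∈ I, pdot (v₁ s) (v₂ s) = 0
  tangent₁ : ∀ s ∈ I, pdot (deriv γ s) (v₁ s) = 0
  tangent₂ : ∀ s ∈ I, pdot (deriv γ s) (v₂ s) = 0

def scurvA (γ v₁ v₂ : ℝ → Fin 4 → ℝ) (s : ℝ) : ℝ := pdot (deriv γ s) (muOf γ v₁ v₂ s)
def scurvL (ε : ℝ) (v₁ v₂ : ℝ → Fin 4 → ℝ) (s : ℝ) : ℝ := -ε * pdot (deriv v₁ s) (v₂ s)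
def scurvM (γ v₁ v₂ : ℝ → Fin 4 → ℝ) (s : ℝ) : ℝ := pdot (deriv v₁ s) (muOf γ v₁ v₂ s)
def scurvN (γ v₁ v₂ : ℝ → Fin 4 → ℝ) (s : ℝ) : ℝ := pdot (deriv v₂ s) (muOf γ v₁ v₂ s)

/-- Pseudo-spherical timelike framed curve on the open interval `I`. -/
structure TimelikeFramed (I : Set ℝ) (γ v₁ v₂ : ℝ → Fin 4 → ℝ) : Prop where
  smooth_γ : ContDiffOn ℝ (⊤ : ℕ∞) γ I
  smooth_v₁ : ContDiffOn ℝ (⊤ : ℕ∞) v₁ I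
  smooth_v₂ : ContDiffOn ℝ (⊤ : ℕ∞) v₂ I
  ads : ∀ s ∈ I, pdot (γ s) (γ s) = -1
  normv₁ : ∀ s ∈ I, pdot (v₁ s) (v₁ s) = 1
  normv₂ : ∀ s ∈ I, pdot (v₂ s) (v₂ s) = 1
  orth₁ : ∀ s ∈ I, pdot (γ s) (v₁ s) = 0
  orth₂ : ∀ s ∈ I, pdot (γ s) (v₂ s) = 0
  orth₃ : ∀ s ∈ I, pdot (v₁ s) (v₂ s) = 0
  tangent₁ : ∀ s ∈ I, pdot (deriv γ s) (v₁ s) = 0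
  tangent₂ : ∀ s ∈ I, pdot (deriv γ s) (v₂ s) = 0

def tcurvA (γ v₁ v₂ : ℝ → Fin 4 → ℝ) (s : ℝ) : ℝ := -pdot (deriv γ s) (muOf γ v₁ v₂ s)
def tcurvL (v₁ v₂ : ℝ → Fin 4 → ℝ) (s : ℝ) : ℝ := pdot (deriv v₁ s) (v₂ s)
def tcurvM (γ v₁ v₂ : ℝ → Fin 4 → ℝ) (s : ℝ) : ℝ := -pdot (deriv v₁ s) (muOf γ v₁ v₂ s)
def tcurvN (γ v₁ v₂ : ℝ → Fin 4 → ℝ) (s : ℝ) : ℝ := -pdot (deriv v₂ s) (muOf γ v₁ v₂ s)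

/-- `g(s)` for the spacelike total evolute. -/
def sG (α ℓh nh : ℝ → ℝ) (εh : ℝ) (s : ℝ) : ℝ :=
  εh * (α s * deriv nh s - nh s * deriv α s) ^ 2
    - (ℓh s) ^ 2 * (nh s) ^ 2 * ((nh s) ^ 2 + εh * (α s) ^ 2)

/-- Total evolute (with the `+` sign) of a spacelike framed immersion with curvature
`(α, ℓ̂, 0, n̂)`. -/
def sEvolute (γ f₁ f₂ : ℝ → Fin 4 → ℝ) (α ℓh nh : ℝ → ℝ) (εh : ℝ) (s : ℝ) : Fin 4 → ℝ :=
  (Real.sqrt |sG α ℓh nh εh s|)⁻¹ •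
    ((ℓh s * nh s) • (nh s • γ s - α s • f₂ s)
      - (α s * deriv nh s - nh s * deriv α s) • f₁ s)

/-- `f(s)` for the timelike total evolute. -/
def tF (α ℓh nh : ℝ → ℝ) (s : ℝ) : ℝ :=
  (α s * deriv nh s - nh s * deriv α s) ^ 2
    - (ℓh s) ^ 2 * (nh s) ^ 2 * ((nh s) ^ 2 - (α s) ^ 2)

/-- Total evolute (with the `+` sign) of a timelike framed immersion with curvature
`(α, ℓ̂, 0, n̂)`. -/
def tEvolute (γ f₁ f₂ : ℝ → Fin 4 → ℝ) (α ℓh nh : ℝ → ℝ) (s : ℝ) : Fin 4 → ℝ :=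
  (Real.sqrt |tF α ℓh nh s|)⁻¹ •
    ((ℓh s * nh s) • (nh s • γ s - α s • f₂ s)
      - (α s * deriv nh s - nh s * deriv α s) • f₁ s)

lemma pdot_comm (u w : Fin 4 → ℝ) : pdot u w = pdot w u := by
  simp [pdot]; ring

lemma pdot_add_left (u v w : Fin 4 → ℝ) : pdot (u + v) w = pdot u w + pdot v w := by
  simp [pdot]; ring

lemma pdot_add_right (u v w : Fin 4 → ℝ) : pdot u (v + w) = pdot u v + pdot u w := by
  simp [pdot]; ring

lemma pdot_smul_left (a : ℝ) (u w : Fin 4 → ℝ) : pdot (a • u) w = a * pdot u w := by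
  simp [pdot]; ring

lemma pdot_smul_right (a : ℝ) (u w : Fin 4 → ℝ) : pdot u (a • w) = a * pdot u w := by
  simp [pdot]; ring

lemma pdot_triple₂ (u v w : Fin 4 → ℝ) : pdot v (tripleProd u v w) = 0 := by
  simp [pdot, tripleProd, det3]; ring

lemma pdot_triple₃ (u v w : Fin 4 → ℝ) : pdot w (tripleProd u v w) = 0 := by
  simp [pdot, tripleProd, det3]; ring

lemma tripleProd_lin (a b c d : ℝ) (u v w : Fin 4 → ℝ) :
    tripleProd u (a • v + b • w) (c • v + d • w) = (a * d - b * c) • tripleProd u v w := by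
  funext i
  fin_cases i <;>
    simp [tripleProd, det3, Pi.add_apply, Pi.smul_apply, smul_eq_mul] <;> ring

lemma hasDerivAt_pdot {f g : ℝ → Fin 4 → ℝ} {f' g' : Fin 4 → ℝ} {s : ℝ}
    (hf : HasDerivAt f f' s) (hg : HasDerivAt g g' s) :
    HasDerivAt (fun t => pdot (f t) (g t)) (pdot f' (g s) + pdot (f s) g') s := by
  have hfi : ∀ i, HasDerivAt (fun t => f t i) (f' i) s := fun i => hasDerivAt_pi.1 hf i
  have hgi : ∀ i, HasDerivAt (fun t => g t i) (g' i) s := fun i => hasDerivAt_pi.1 hg i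
  have h := ((((hfi 0).mul (hgi 0)).neg.sub ((hfi 1).mul (hgi 1))).add
      ((hfi 2).mul (hgi 2))).add ((hfi 3).mul (hgi 3))
  refine (h.congr_deriv ?_).congr_of_eventuallyEq (Filter.Eventually.of_forall fun t => ?_)
  · simp [pdot]; ring
  · simp [pdot]

theorem timelike_bishop_frame
    (I : Set ℝ) (hI : IsOpen I) (hIc : I.OrdConnected)
    (γ v₁ v₂ : ℝ → Fin 4 → ℝ)
    (hfr : TimelikeFramed I γ v₁ v₂)
    (α ℓ m n : ℝ → ℝ)
    (hA : ∀ s ∈ I, α s = tcurvA γ v₁ v₂ s)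
    (hL : ∀ s ∈ I, ℓ s = tcurvL v₁ v₂ s)
    (hM : ∀ s ∈ I, m s = tcurvM γ v₁ v₂ s)
    (hN : ∀ s ∈ I, n s = tcurvN γ v₁ v₂ s)
    (θ : ℝ → ℝ) (hθ : ContDiffOn ℝ (⊤ : ℕ∞) θ I)
    (hθ' : ∀ s ∈ I, deriv θ s = ℓ s)
    (w₁ w₂ : ℝ → Fin 4 → ℝ)
    (hw₁ : ∀ s, w₁ s = Real.cos (θ s) • v₁ s + (-Real.sin (θ s)) • v₂ s)
    (hw₂ : ∀ s, w₂ s = Real.sin (θ s) • v₁ s + Real.cos (θ s) • v₂ s) :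
    TimelikeFramed I γ w₁ w₂ ∧
    (∀ s ∈ I, muOf γ w₁ w₂ s = muOf γ v₁ v₂ s) ∧
    (∀ s ∈ I,
      tcurvA γ w₁ w₂ s = α s ∧
      tcurvL w₁ w₂ s = 0 ∧
      tcurvM γ w₁ w₂ s = Real.cos (θ s) * m s - Real.sin (θ s) * n s ∧
      tcurvN γ w₁ w₂ s = Real.sin (θ s) * m s + Real.cos (θ s) * n s) := by

  have hw₁fun : w₁ = fun t => Real.cos (θ t) • v₁ t + (-Real.sin (θ t)) • v₂ t := funext hw₁
  have hw₂fun : w₂ = fun t => Real.sin (θ t) • v₁ t + Real.cos (θ t) • v₂ t := funext hw₂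
  -- μ is unchanged
  have hmu : ∀ s, muOf γ w₁ w₂ s = muOf γ v₁ v₂ s := by
    intro s
    have h1 : Real.cos (θ s) * Real.cos (θ s) - -Real.sin (θ s) * Real.sin (θ s) = 1 := by
      linear_combination Real.sin_sq_add_cos_sq (θ s)
    rw [muOf, hw₁, hw₂, tripleProd_lin, h1, one_smul, muOf]
  -- symmetric orthogonality facts
  have horth₃' : ∀ s ∈ I, pdot (v₂ s) (v₁ s) = 0 := fun s hs => by
    rw [pdot_comm]; exact hfr.orth₃ s hs
  -- derivative facts at points of I
  have key : ∀ s ∈ I,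
      pdot (deriv v₁ s) (v₁ s) = 0 ∧ pdot (deriv v₂ s) (v₂ s) = 0 ∧
      pdot (deriv v₁ s) (v₂ s) = ℓ s ∧ pdot (deriv v₂ s) (v₁ s) = -ℓ s ∧
      deriv w₁ s = Real.cos (θ s) • deriv v₁ s + (-Real.sin (θ s) * ℓ s) • v₁ s +
        ((-Real.sin (θ s)) • deriv v₂ s + (-(Real.cos (θ s) * ℓ s)) • v₂ s) ∧
      deriv w₂ s = Real.sin (θ s) • deriv v₁ s + (Real.cos (θ s) * ℓ s) • v₁ s +
        (Real.cos (θ s) • deriv v₂ s + (-Real.sin (θ s) * ℓ s) • v₂ s) := by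
    intro s hs
    have hv₁ : HasDerivAt v₁ (deriv v₁ s) s :=
      ((hfr.smooth_v₁.contDiffAt (hI.mem_nhds hs)).differentiableAt (by simp)).hasDerivAt
    have hv₂ : HasDerivAt v₂ (deriv v₂ s) s :=
      ((hfr.smooth_v₂.contDiffAt (hI.mem_nhds hs)).differentiableAt (by simp)).hasDerivAt
    have hθd : HasDerivAt θ (ℓ s) s := by
      have := ((hθ.contDiffAt (hI.mem_nhds hs)).differentiableAt (by simp)).hasDerivAt
      rwa [hθ' s hs] at this
    have hcos : HasDerivAt (fun t => Real.cos (θ t)) (-Real.sin (θ s) * ℓ s) s :=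
      (Real.hasDerivAt_cos (θ s)).comp s hθd
    have hsin : HasDerivAt (fun t => Real.sin (θ t)) (Real.cos (θ s) * ℓ s) s :=
      (Real.hasDerivAt_sin (θ s)).comp s hθd
    have e1 : pdot (deriv v₁ s) (v₁ s) + pdot (v₁ s) (deriv v₁ s) = 0 := by
      refine (hasDerivAt_pdot hv₁ hv₁).unique ?_
      refine (hasDerivAt_const s (1:ℝ)).congr_of_eventuallyEq ?_
      filter_upwards [hI.mem_nhds hs] with t ht using hfr.normv₁ t ht
    have e2 : pdot (deriv v₂ s) (v₂ s) + pdot (v₂ s) (deriv v₂ s) = 0 := by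
      refine (hasDerivAt_pdot hv₂ hv₂).unique ?_
      refine (hasDerivAt_const s (1:ℝ)).congr_of_eventuallyEq ?_
      filter_upwards [hI.mem_nhds hs] with t ht using hfr.normv₂ t ht
    have e3 : pdot (deriv v₁ s) (v₂ s) + pdot (v₁ s) (deriv v₂ s) = 0 := by
      refine (hasDerivAt_pdot hv₁ hv₂).unique ?_
      refine (hasDerivAt_const s (0:ℝ)).congr_of_eventuallyEq ?_
      filter_upwards [hI.mem_nhds hs] with t ht using hfr.orth₃ t ht
    have A : pdot (deriv v₁ s) (v₁ s) = 0 := by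
      rw [pdot_comm (v₁ s)] at e1; linarith
    have B : pdot (deriv v₂ s) (v₂ s) = 0 := by
      rw [pdot_comm (v₂ s)] at e2; linarith
    have C : pdot (deriv v₁ s) (v₂ s) = ℓ s := (hL s hs).symm
    have C2 : pdot (deriv v₂ s) (v₁ s) = -ℓ s := by
      rw [pdot_comm]; rw [C] at e3; linarith
    refine ⟨A, B, C, C2, ?_, ?_⟩
    · rw [hw₁fun]
      exact ((hcos.smul hv₁).add ((hsin.neg).smul hv₂)).deriv
    · rw [hw₂fun]
      exact ((hsin.smul hv₁).add (hcos.smul hv₂)).deriv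
  -- the framed-curve structure
  have hframed : TimelikeFramed I γ w₁ w₂ := by
    refine ⟨hfr.smooth_γ, ?_, ?_, hfr.ads, ?_, ?_, ?_, ?_, ?_, ?_, ?_⟩
    · rw [hw₁fun]
      exact ((Real.contDiff_cos.comp_contDiffOn hθ).smul hfr.smooth_v₁).add
        (((Real.contDiff_sin.comp_contDiffOn hθ).neg).smul hfr.smooth_v₂)
    · rw [hw₂fun]
      exact ((Real.contDiff_sin.comp_contDiffOn hθ).smul hfr.smooth_v₁).add
        ((Real.contDiff_cos.comp_contDiffOn hθ).smul hfr.smooth_v₂)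
    · intro s hs
      rw [hw₁]
      simp only [pdot_add_left, pdot_add_right, pdot_smul_left, pdot_smul_right]
      rw [hfr.normv₁ s hs, hfr.normv₂ s hs, hfr.orth₃ s hs, horth₃' s hs]
      linear_combination Real.sin_sq_add_cos_sq (θ s)
    · intro s hs
      rw [hw₂]
      simp only [pdot_add_left, pdot_add_right, pdot_smul_left, pdot_smul_right]
      rw [hfr.normv₁ s hs, hfr.normv₂ s hs, hfr.orth₃ s hs, horth₃' s hs]
      linear_combination Real.sin_sq_add_cos_sq (θ s)
    · intro s hs
      rw [hw₁]
      simp only [pdot_add_right, pdot_smul_right]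
      rw [hfr.orth₁ s hs, hfr.orth₂ s hs]; ring
    · intro s hs
      rw [hw₂]
      simp only [pdot_add_right, pdot_smul_right]
      rw [hfr.orth₁ s hs, hfr.orth₂ s hs]; ring
    · intro s hs
      rw [hw₁, hw₂]
      simp only [pdot_add_left, pdot_add_right, pdot_smul_left, pdot_smul_right]
      rw [hfr.normv₁ s hs, hfr.normv₂ s hs, hfr.orth₃ s hs, horth₃' s hs]
      ring
    · intro s hs
      rw [hw₁]
      simp only [pdot_add_right, pdot_smul_right]
      rw [hfr.tangent₁ s hs, hfr.tangent₂ s hs]; ring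
    · intro s hs
      rw [hw₂]
      simp only [pdot_add_right, pdot_smul_right]
      rw [hfr.tangent₁ s hs, hfr.tangent₂ s hs]; ring
  refine ⟨hframed, fun s _ => hmu s, ?_⟩
  intro s hs
  obtain ⟨A, B, C, C2, hdw₁, hdw₂⟩ := key s hs
  have hμ1 : pdot (v₁ s) (muOf γ v₁ v₂ s) = 0 := pdot_triple₂ (γ s) (v₁ s) (v₂ s)
  have hμ2 : pdot (v₂ s) (muOf γ v₁ v₂ s) = 0 := pdot_triple₃ (γ s) (v₁ s) (v₂ s)
  have hμm : pdot (deriv v₁ s) (muOf γ v₁ v₂ s) = -m s := by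
    have := hM s hs; unfold tcurvM at this; linarith
  have hμn : pdot (deriv v₂ s) (muOf γ v₁ v₂ s) = -n s := by
    have := hN s hs; unfold tcurvN at this; linarith
  refine ⟨?_, ?_, ?_, ?_⟩
  · unfold tcurvA
    rw [hmu s]
    have := hA s hs; unfold tcurvA at this; linarith
  · unfold tcurvL
    rw [hdw₁, hw₂]
    simp only [pdot_add_left, pdot_add_right, pdot_smul_left, pdot_smul_right]
    rw [A, B, C, C2, hfr.normv₁ s hs, hfr.normv₂ s hs, hfr.orth₃ s hs, horth₃' s hs]
    ring
  · unfold tcurvM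
    rw [hmu s, hdw₁]
    simp only [pdot_add_left, pdot_smul_left]
    rw [hμ1, hμ2, hμm, hμn]
    ring
  · unfold tcurvN
    rw [hmu s, hdw₂]
    simp only [pdot_add_left, pdot_smul_left]
    rw [hμ1, hμ2, hμm, hμn]
    ring
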